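/- Let r ≥ 1 be an integer, z ∈ ℂ, and ħ, η nonzero real numbers. Let V = ℂ^{r+1} with basis v_0, …, v_r. For l ∈ {1, …, r} and u ∈ ℂ with sinh(πη(u − z − (r−l)iħ/2)) ≠ 0, define linear operators on V by: e⁺_l(u)·v_j = δ_{l,j}·[−sinh(iπηħ)/sinh(πη(u − z − (r−l)iħ/2))]·v_{j−1}; f⁺_l(u)·v_{j−1} = δ_{l,j}·[−sinh(iπηħ)/sinh(πη(u − z − (r−l)iħ/2))]·v_j; and H⁺_l(u)·v_j = [δ_{l,j}·sinh(πη(u − z − (r−l−2)iħ/2))/sinh(πη(u − z − (r−l)iħ/2)) + δ_{l−1,j}·sinh(πη(u − z − (r−l+2)iħ/2))/sinh(πη(u − z − (r−l)iħ/2)) + (1 − δ_{l,j} − δ_{l−1,j})]·v_j. Then for all l, m ∈ {1, …, r} and all u, v ∈ ℂ such that the relevant denominators are nonzero and sinh(πη(u − v)) ≠ 0, the commutator satisfies e⁺_l(u)f⁺_m(v) − f⁺_m(v)e⁺_l(u) = δ_{l,m}·[sinh(iπηħ)/sinh(πη(u − v))]·(H⁺_l(u) − H⁺_l(v)). -/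

import Mathlib

/-!
Write `l = k + 1` with `k : Fin r`. Then `e⁺_l(u)` and `f⁺_l(v)` are the matrix units
`E_{k,k+1}`, `E_{k+1,k}` scaled by `a(u) = -sinh c / sinh X(u)` and `a(v)` (with `c = iπηħ`
and `X(u) = πη(u − z − (r−l)iħ/2)`), so the commutator vanishes for `l ≠ m` and equals
`a(u) a(v) (E_{k,k} − E_{k+1,k+1})` for `l = m`. The current `H⁺_l(u)` is the identity corrected
by `sinh (X ∓ c) / sinh X` at the diagonal places `k` and `k + 1`, and the addition formula for
`sinh` gives `sinh c / sinh (X − Y) · (sinh (X ± c) / sinh X − sinh (Y ± c) / sinh Y)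
= ∓ sinh c / sinh X · sinh c / sinh Y`, which turns `H⁺_l(u) − H⁺_l(v)` into the same multiple
of `E_{k,k} − E_{k+1,k+1}`.
-/

/-- The positive half-current `e⁺_l(u)` of the `(r+1)`-dimensional evaluation
representation of `A_{ħ,η}(ŝl_{r+1})` at `c = 0`, as a matrix acting on the basis
`v_0, …, v_r` by `e⁺_l(u)·v_j = δ_{l,j}·[−sinh(iπηħ)/sinh(πη(u − z − (r−l)iħ/2))]·v_{j−1}`. -/
noncomputable def evalE (r : ℕ) (z : ℂ) (hbar η : ℝ) (l : ℕ) (u : ℂ) :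
    Matrix (Fin (r + 1)) (Fin (r + 1)) ℂ := fun j' j =>
  if (j : ℕ) = l ∧ (j' : ℕ) + 1 = l then
    -Complex.sinh (Complex.I * (Real.pi : ℂ) * (η : ℂ) * (hbar : ℂ)) /
      Complex.sinh ((Real.pi : ℂ) * (η : ℂ) *
        (u - z - ((r : ℂ) - (l : ℂ)) * Complex.I * (hbar : ℂ) / 2))
  else 0

/-- The positive half-current `f⁺_l(u)`, acting by
`f⁺_l(u)·v_{j−1} = δ_{l,j}·[−sinh(iπηħ)/sinh(πη(u − z − (r−l)iħ/2))]·v_j`. -/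
noncomputable def evalF (r : ℕ) (z : ℂ) (hbar η : ℝ) (l : ℕ) (u : ℂ) :
    Matrix (Fin (r + 1)) (Fin (r + 1)) ℂ := fun j' j =>
  if (j : ℕ) + 1 = l ∧ (j' : ℕ) = l then
    -Complex.sinh (Complex.I * (Real.pi : ℂ) * (η : ℂ) * (hbar : ℂ)) /
      Complex.sinh ((Real.pi : ℂ) * (η : ℂ) *
        (u - z - ((r : ℂ) - (l : ℂ)) * Complex.I * (hbar : ℂ) / 2))
  else 0

/-- The positive half-current `H⁺_l(u)`, acting diagonally by
`H⁺_l(u)·v_j = [δ_{l,j}·sinh(πη(u−z−(r−l−2)iħ/2))/sinh(πη(u−z−(r−l)iħ/2))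
 + δ_{l−1,j}·sinh(πη(u−z−(r−l+2)iħ/2))/sinh(πη(u−z−(r−l)iħ/2))
 + (1 − δ_{l,j} − δ_{l−1,j})]·v_j`. -/
noncomputable def evalH (r : ℕ) (z : ℂ) (hbar η : ℝ) (l : ℕ) (u : ℂ) :
    Matrix (Fin (r + 1)) (Fin (r + 1)) ℂ := fun j' j =>
  if j' = j then
    (if (j : ℕ) = l then (1 : ℂ) else 0) *
        (Complex.sinh ((Real.pi : ℂ) * (η : ℂ) *
            (u - z - ((r : ℂ) - (l : ℂ) - 2) * Complex.I * (hbar : ℂ) / 2)) /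
          Complex.sinh ((Real.pi : ℂ) * (η : ℂ) *
            (u - z - ((r : ℂ) - (l : ℂ)) * Complex.I * (hbar : ℂ) / 2))) +
      (if (j : ℕ) + 1 = l then (1 : ℂ) else 0) *
        (Complex.sinh ((Real.pi : ℂ) * (η : ℂ) *
            (u - z - ((r : ℂ) - (l : ℂ) + 2) * Complex.I * (hbar : ℂ) / 2)) /
          Complex.sinh ((Real.pi : ℂ) * (η : ℂ) *
            (u - z - ((r : ℂ) - (l : ℂ)) * Complex.I * (hbar : ℂ) / 2))) +
      (1 - (if (j : ℕ) = l then (1 : ℂ) else 0) -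
        (if (j : ℕ) + 1 = l then (1 : ℂ) else 0))
  else 0

open Complex Matrix

theorem sinh_div_mul_sinh_add_div_sub_sinh_add_div {X Y : ℂ} (c : ℂ) (hX : sinh X ≠ 0)
    (hY : sinh Y ≠ 0) (hXY : sinh (X - Y) ≠ 0) :
    sinh c / sinh (X - Y) * (sinh (X + c) / sinh X - sinh (Y + c) / sinh Y) =
      -(sinh c / sinh X * (sinh c / sinh Y)) := by
  field_simp
  rw [sinh_add, sinh_add, sinh_sub]
  ring

theorem sinh_div_mul_sinh_sub_div_sub_sinh_sub_div {X Y : ℂ} (c : ℂ) (hX : sinh X ≠ 0)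
    (hY : sinh Y ≠ 0) (hXY : sinh (X - Y) ≠ 0) :
    sinh c / sinh (X - Y) * (sinh (X - c) / sinh X - sinh (Y - c) / sinh Y) =
      sinh c / sinh X * (sinh c / sinh Y) := by
  have h := sinh_div_mul_sinh_add_div_sub_sinh_add_div (-c) hX hY hXY
  simp only [sinh_neg, ← sub_eq_add_neg] at h
  linear_combination -h

namespace EvalRep

variable (r : ℕ) (z : ℂ) (hbar η : ℝ)

noncomputable def denomArg (l : ℕ) (u : ℂ) : ℂ :=
  Real.pi * η * (u - z - (r - l) * I * hbar / 2)

noncomputable def coeff (l : ℕ) (u : ℂ) : ℂ :=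
  -sinh (I * Real.pi * η * hbar) / sinh (denomArg r z hbar η l u)

variable {r z hbar η}

theorem evalE_succ (k : Fin r) (u : ℂ) :
    evalE r z hbar η (k + 1) u = single k.castSucc k.succ (coeff r z hbar η (k + 1) u) := by
  ext i j
  simp only [evalE, coeff, denomArg, single_apply, Fin.ext_iff, Fin.val_castSucc, Fin.val_succ,
    add_left_inj]
  grind

theorem evalF_succ (k : Fin r) (u : ℂ) :
    evalF r z hbar η (k + 1) u = single k.succ k.castSucc (coeff r z hbar η (k + 1) u) := by
  ext i j
  simp only [evalF, coeff, denomArg, single_apply, Fin.ext_iff, Fin.val_castSucc, Fin.val_succ,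
    add_left_inj]
  grind

theorem evalH_succ (k : Fin r) (u : ℂ) :
    evalH r z hbar η (k + 1) u =
      1 + (sinh (denomArg r z hbar η (k + 1) u - I * Real.pi * η * hbar) /
            sinh (denomArg r z hbar η (k + 1) u) - 1) • single k.castSucc k.castSucc 1 +
        (sinh (denomArg r z hbar η (k + 1) u + I * Real.pi * η * hbar) /
            sinh (denomArg r z hbar η (k + 1) u) - 1) • single k.succ k.succ 1 := by
  have base : (Real.pi : ℂ) * η * (u - z - (r - ((k + 1 : ℕ) : ℂ)) * I * hbar / 2) =
      denomArg r z hbar η (k + 1) u := rfl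
  have raised : (Real.pi : ℂ) * η * (u - z - (r - ((k + 1 : ℕ) : ℂ) - 2) * I * hbar / 2) =
      denomArg r z hbar η (k + 1) u + I * Real.pi * η * hbar := by
    unfold denomArg; ring
  have lowered : (Real.pi : ℂ) * η * (u - z - (r - ((k + 1 : ℕ) : ℂ) + 2) * I * hbar / 2) =
      denomArg r z hbar η (k + 1) u - I * Real.pi * η * hbar := by
    unfold denomArg; ring
  ext i j
  simp only [evalH, raised, lowered, base, Matrix.add_apply, Matrix.smul_apply, one_apply,
    single_apply, Fin.ext_iff, Fin.val_castSucc, Fin.val_succ, smul_eq_mul]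
  split_ifs <;> grind

theorem evalE_mul_evalF_of_ne {l m : ℕ} (h : l ≠ m) (u v : ℂ) :
    evalE r z hbar η l u * evalF r z hbar η m v = 0 := by
  ext i j
  rw [mul_apply, Matrix.zero_apply]
  refine Finset.sum_eq_zero fun k _ => ?_
  simp only [evalE, evalF]
  grind

theorem evalF_mul_evalE_of_ne {l m : ℕ} (h : l ≠ m) (u v : ℂ) :
    evalF r z hbar η m v * evalE r z hbar η l u = 0 := by
  ext i j
  rw [mul_apply, Matrix.zero_apply]
  refine Finset.sum_eq_zero fun k _ => ?_
  simp only [evalE, evalF]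
  grind

theorem evalE_succ_mul_evalF_succ_sub (k : Fin r) (u v : ℂ) :
    evalE r z hbar η (k + 1) u * evalF r z hbar η (k + 1) v -
        evalF r z hbar η (k + 1) v * evalE r z hbar η (k + 1) u =
      (coeff r z hbar η (k + 1) u * coeff r z hbar η (k + 1) v) •
        (single k.castSucc k.castSucc 1 - single k.succ k.succ 1) := by
  rw [evalE_succ, evalF_succ, single_mul_single_same, single_mul_single_same, smul_sub,
    smul_single, smul_single, smul_eq_mul, mul_one, mul_comm (coeff r z hbar η (k + 1) v)]

theorem smul_evalH_succ_sub (k : Fin r) {u v : ℂ}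
    (hu : sinh (denomArg r z hbar η (k + 1) u) ≠ 0) (hv : sinh (denomArg r z hbar η (k + 1) v) ≠ 0)
    (huv : sinh (Real.pi * η * (u - v)) ≠ 0) :
    (sinh (I * Real.pi * η * hbar) / sinh (Real.pi * η * (u - v))) •
        (evalH r z hbar η (k + 1) u - evalH r z hbar η (k + 1) v) =
      (coeff r z hbar η (k + 1) u * coeff r z hbar η (k + 1) v) •
        (single k.castSucc k.castSucc 1 - single k.succ k.succ 1) := by
  have hdiff : denomArg r z hbar η (k + 1) u - denomArg r z hbar η (k + 1) v =
      Real.pi * η * (u - v) := by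
    unfold denomArg; ring
  rw [← hdiff] at huv ⊢
  rw [evalH_succ, evalH_succ, coeff, coeff, neg_div, neg_div, neg_mul_neg]
  set c := I * Real.pi * η * hbar
  set X := denomArg r z hbar η (k + 1) u
  set Y := denomArg r z hbar η (k + 1) v
  calc _ = (sinh c / sinh (X - Y) * (sinh (X - c) / sinh X - sinh (Y - c) / sinh Y)) •
          single k.castSucc k.castSucc (1 : ℂ) +
        (sinh c / sinh (X - Y) * (sinh (X + c) / sinh X - sinh (Y + c) / sinh Y)) •
          single k.succ k.succ (1 : ℂ) := by module
    _ = _ := by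
      rw [sinh_div_mul_sinh_add_div_sub_sinh_add_div c hu hv huv,
        sinh_div_mul_sinh_sub_div_sub_sinh_sub_div c hu hv huv]
      module

end EvalRep

theorem eval_rep_EF_commutator_general (r : ℕ) (z : ℂ) (hbar η : ℝ) (l m : ℕ)
    (hl1 : 1 ≤ l) (hlr : l ≤ r) (u v : ℂ)
    (h1 : Complex.sinh ((Real.pi : ℂ) * (η : ℂ) *
      (u - z - ((r : ℂ) - (l : ℂ)) * Complex.I * (hbar : ℂ) / 2)) ≠ 0)
    (h2 : Complex.sinh ((Real.pi : ℂ) * (η : ℂ) *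
      (v - z - ((r : ℂ) - (l : ℂ)) * Complex.I * (hbar : ℂ) / 2)) ≠ 0)
    (h4 : Complex.sinh ((Real.pi : ℂ) * (η : ℂ) * (u - v)) ≠ 0) :
    evalE r z hbar η l u * evalF r z hbar η m v -
        evalF r z hbar η m v * evalE r z hbar η l u =
      ((if l = m then (1 : ℂ) else 0) *
          (Complex.sinh (Complex.I * (Real.pi : ℂ) * (η : ℂ) * (hbar : ℂ)) /
            Complex.sinh ((Real.pi : ℂ) * (η : ℂ) * (u - v)))) •
        (evalH r z hbar η l u - evalH r z hbar η l v) := by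
  by_cases hlm : l = m
  · subst hlm
    obtain ⟨k, rfl⟩ : ∃ k : Fin r, (k : ℕ) + 1 = l := ⟨⟨l - 1, by omega⟩, by simp only; omega⟩
    rw [if_pos rfl, one_mul, EvalRep.smul_evalH_succ_sub k h1 h2 h4]
    exact EvalRep.evalE_succ_mul_evalF_succ_sub k u v
  · rw [EvalRep.evalE_mul_evalF_of_ne hlm, EvalRep.evalF_mul_evalE_of_ne hlm, if_neg hlm, zero_mul,
      zero_smul, sub_zero]

/-- the Ding–Frenkel-type commutation relation
`[e⁺_l(u), f⁺_m(v)] = δ_{l,m}·[sinh(iπηħ)/sinh(πη(u − v))]·(H⁺_l(u) − H⁺_l(v))`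
holds in the `(r+1)`-dimensional evaluation representation of `A_{ħ,η}(ŝl_{r+1})`. -/
theorem eval_rep_EF_commutator (r : ℕ) (hr : 1 ≤ r) (z : ℂ) (hbar η : ℝ)
    (hhbar : hbar ≠ 0) (hη : η ≠ 0) (l m : ℕ)
    (hl1 : 1 ≤ l) (hlr : l ≤ r) (hm1 : 1 ≤ m) (hmr : m ≤ r) (u v : ℂ)
    (h1 : Complex.sinh ((Real.pi : ℂ) * (η : ℂ) *
      (u - z - ((r : ℂ) - (l : ℂ)) * Complex.I * (hbar : ℂ) / 2)) ≠ 0)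
    (h2 : Complex.sinh ((Real.pi : ℂ) * (η : ℂ) *
      (v - z - ((r : ℂ) - (l : ℂ)) * Complex.I * (hbar : ℂ) / 2)) ≠ 0)
    (h3 : Complex.sinh ((Real.pi : ℂ) * (η : ℂ) *
      (v - z - ((r : ℂ) - (m : ℂ)) * Complex.I * (hbar : ℂ) / 2)) ≠ 0)
    (h4 : Complex.sinh ((Real.pi : ℂ) * (η : ℂ) * (u - v)) ≠ 0) :
    evalE r z hbar η l u * evalF r z hbar η m v -
        evalF r z hbar η m v * evalE r z hbar η l u =
      ((if l = m then (1 : ℂ) else 0) *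
          (Complex.sinh (Complex.I * (Real.pi : ℂ) * (η : ℂ) * (hbar : ℂ)) /
            Complex.sinh ((Real.pi : ℂ) * (η : ℂ) * (u - v)))) •
        (evalH r z hbar η l u - evalH r z hbar η l v) :=
  eval_rep_EF_commutator_general r z hbar η l m hl1 hlr u v h1 h2 h4
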